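/- arXiv:1807.09302 — 9 statements merged into one kernel-verified Lean document; each statement's English description precedes it below -/
import Mathlib

section
/- Let V be a finite set of points with a symmetric weight function w satisfying the λ-parametrized triangle inequality w(a,b) + w(b,c) ≥ λ·w(c,a) for all a,b,c, with λ ≤ 1. Then for any p ≥ 1, the weights w(e)^p satisfy the (λ^p/2^(p-1))-parametrized triangle inequality; in particular they satisfy w(a,b)^p + w(b,c)^p ≥ (λ/2)^p · w(c,a)^p. -/
open Real

lemma real_rpow_add_le_mul_rpow_add_rpow {z₁ z₂ : ℝ} (h₁ : 0 ≤ z₁) (h₂ : 0 ≤ z₂) {p : ℝ}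
    (hp : 1 ≤ p) : (z₁ + z₂) ^ p ≤ (2 : ℝ) ^ (p - 1) * (z₁ ^ p + z₂ ^ p) := by
  lift z₁ to NNReal using h₁
  lift z₂ to NNReal using h₂
  exact_mod_cast NNReal.rpow_add_le_mul_rpow_add_rpow z₁ z₂ hp

/-- In a λ-metric graph, raising weights to the power `p ≥ 1` yields a
`(λ^p / 2^(p-1))`-parametrized triangle inequality, and in particular a `(λ/2)^p` one. -/
theorem lp_triangle_inequality {V : Type*} (w : V → V → ℝ) (lam : ℝ)
    (hlam_pos : 0 < lam) (hlam_le : lam ≤ 1)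
    (hnonneg : ∀ a b, 0 ≤ w a b)
    (hsymm : ∀ a b, w a b = w b a)
    (htri : ∀ a b c, w a b + w b c ≥ lam * w c a)
    (p : ℝ) (hp : 1 ≤ p) :
    ∀ a b c, (w a b) ^ p + (w b c) ^ p ≥ (lam ^ p / 2 ^ (p - 1)) * (w c a) ^ p ∧
      (w a b) ^ p + (w b c) ^ p ≥ ((lam / 2) ^ p) * (w c a) ^ p := by
  intro a b c
  have h2 : (0 : ℝ) < 2 ^ (p - 1) := Real.rpow_pos_of_pos (by norm_num) _
  have key : (lam ^ p / 2 ^ (p - 1)) * (w c a) ^ p ≤ (w a b) ^ p + (w b c) ^ p := by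
    have h1 : (lam * w c a) ^ p ≤ (w a b + w b c) ^ p :=
      Real.rpow_le_rpow (mul_nonneg hlam_pos.le (hnonneg c a)) (htri a b c)
        (le_trans zero_le_one hp)
    have h3 : (w a b + w b c) ^ p ≤ 2 ^ (p - 1) * ((w a b) ^ p + (w b c) ^ p) :=
      real_rpow_add_le_mul_rpow_add_rpow (hnonneg a b) (hnonneg b c) hp
    have h4 : lam ^ p * (w c a) ^ p ≤ 2 ^ (p - 1) * ((w a b) ^ p + (w b c) ^ p) := by
      rw [← Real.mul_rpow hlam_pos.le (hnonneg c a)]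
      exact h1.trans h3
    rw [div_mul_eq_mul_div, div_le_iff₀ h2, mul_comm ((w a b) ^ p + (w b c) ^ p)]
    exact h4
  refine ⟨key, le_trans (mul_le_mul_of_nonneg_right ?_ (Real.rpow_nonneg (hnonneg c a) p)) key⟩
  rw [Real.div_rpow hlam_pos.le (by norm_num)]
  apply div_le_div_of_nonneg_left (Real.rpow_nonneg hlam_pos.le p) h2
  exact Real.rpow_le_rpow_of_exponent_le (by norm_num) (by linarith)
end

section
/- Let G = (V,E) be a complete graph on a finite vertex set V with nonnegative symmetric edge weights w satisfying the λ-parametrized triangle inequality, and let L be an upper bound on all edge weights. Let u, v be vertices with w(u,v) ≥ L/2. Then the number of vertices v' ∈ V with w(u,v') ≥ λL/4, plus the number of vertices v' ∈ V with w(v,v') ≥ λL/4 (counting u and v themselves via the edge (u,v)), is at least |V|. Consequently, at least one of u, v has at least |V|/2 neighbors at distance ≥ λL/4. -/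
/-- In a λ-metric graph with weights bounded by `L`, for an edge `(u,v)` of
weight at least `L/2`, the degrees of `u` and `v` in the `λL/4`-threshold graph (each
counting the edge `(u,v)` itself) sum to at least `|V|`, and consequently one of the two
endpoints has degree at least `|V|/2`. -/
theorem heavy_edge_degree_sum {V : Type*} [Fintype V] [DecidableEq V]
    (w : V → V → ℝ) (lam L : ℝ)
    (hlam_pos : 0 < lam) (hlam_le : lam ≤ 1)
    (hnonneg : ∀ a b, 0 ≤ w a b)
    (hsymm : ∀ a b, w a b = w b a)
    (htri : ∀ a b c, w a b + w b c ≥ lam * w c a)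
    (hL : ∀ a b, a ≠ b → w a b ≤ L)
    (u v : V) (huv : u ≠ v) (hheavy : w u v ≥ L / 2) :
    ((1 + (Finset.univ.filter fun v' : V => v' ≠ u ∧ v' ≠ v ∧ w u v' ≥ lam * L / 4).card)
      + (1 + (Finset.univ.filter fun v' : V => v' ≠ u ∧ v' ≠ v ∧ w v v' ≥ lam * L / 4).card)
        ≥ Fintype.card V) ∧
    (((1 + (Finset.univ.filter fun v' : V => v' ≠ u ∧ v' ≠ v ∧ w u v' ≥ lam * L / 4).card : ℕ) : ℝ)
        ≥ (Fintype.card V : ℝ) / 2 ∨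
      ((1 + (Finset.univ.filter fun v' : V => v' ≠ u ∧ v' ≠ v ∧ w v v' ≥ lam * L / 4).card : ℕ) : ℝ)
        ≥ (Fintype.card V : ℝ) / 2) := by
  classical
  set A := Finset.univ.filter fun v' : V => v' ≠ u ∧ v' ≠ v ∧ w u v' ≥ lam * L / 4 with hA
  set B := Finset.univ.filter fun v' : V => v' ≠ u ∧ v' ≠ v ∧ w v v' ≥ lam * L / 4 with hB
  have hsub : (Finset.univ \ {u, v} : Finset V) ⊆ A ∪ B := by
    intro x hx
    simp only [Finset.mem_sdiff, Finset.mem_insert, Finset.mem_singleton] at hx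
    push_neg at hx
    obtain ⟨-, hxu, hxv⟩ := hx
    have h1 : w u x + w x v ≥ lam * w v u := htri u x v
    have h2 : lam * w v u ≥ lam * (L / 2) := by
      rw [hsymm v u]
      exact mul_le_mul_of_nonneg_left hheavy hlam_pos.le
    have hkey : w u x ≥ lam * L / 4 ∨ w x v ≥ lam * L / 4 := by
      by_contra hc
      push_neg at hc
      linarith [hc.1, hc.2]
    simp only [hA, hB, Finset.mem_union, Finset.mem_filter, Finset.mem_univ, true_and]
    rcases hkey with h | h
    · exact Or.inl ⟨hxu, hxv, h⟩
    · exact Or.inr ⟨hxu, hxv, by rwa [hsymm v x]⟩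
  have hcard2 : ({u, v} : Finset V).card = 2 := by
    rw [Finset.card_insert_of_notMem (by simpa using huv), Finset.card_singleton]
  have hsd : (Finset.univ \ {u, v} : Finset V).card = Fintype.card V - 2 := by
    rw [Finset.card_sdiff_of_subset (Finset.subset_univ _), hcard2, Finset.card_univ]
  have hAB : Fintype.card V - 2 ≤ A.card + B.card := by
    calc Fintype.card V - 2 = (Finset.univ \ {u, v} : Finset V).card := hsd.symm
      _ ≤ (A ∪ B).card := Finset.card_le_card hsub
      _ ≤ A.card + B.card := Finset.card_union_le A B
  have h2le : 2 ≤ Fintype.card V := by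
    have : ({u, v} : Finset V).card ≤ Fintype.card V := by
      rw [← Finset.card_univ]; exact Finset.card_le_card (Finset.subset_univ _)
    omega
  have hmain : (1 + A.card) + (1 + B.card) ≥ Fintype.card V := by omega
  refine ⟨hmain, ?_⟩
  by_contra hc
  push_neg at hc
  obtain ⟨h1, h2⟩ := hc
  have hmainR : ((1 + A.card : ℕ) : ℝ) + ((1 + B.card : ℕ) : ℝ) ≥ (Fintype.card V : ℝ) := by
    push_cast
    exact_mod_cast (by exact_mod_cast hmain : ((1 + A.card) + (1 + B.card) : ℕ) ≥ (Fintype.card V : ℕ)).le |>.trans_eq (by push_cast; ring) |>.ge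
  linarith
end

section
/- Let G be a complete graph on finite vertex set V with nonnegative symmetric edge weights satisfying the λ-triangle inequality, with all weights at most L. Then the set of vertices having at least |V|/2 neighbors at weight-distance at least λL/4 forms a vertex cover of the graph consisting of all edges with weight at least L/2. That is, every edge (u,v) with w(u,v) ≥ L/2 has at least one endpoint x such that |{y ∈ V : y ≠ x, w(x,y) ≥ λL/4}| + 1 ≥ |V|/2. -/
/-- In a λ-metric graph with weights bounded by `L`, the set of vertices with
at least `|V|/2` neighbors at distance at least `λL/4` covers every edge of weight at
least `L/2`: every such edge has an endpoint `x` with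
`|{y ≠ x : w x y ≥ λL/4}| + 1 ≥ |V|/2`. -/
theorem high_degree_vertices_cover_heavy_edges {V : Type*} [Fintype V] [DecidableEq V]
    (w : V → V → ℝ) (lam L : ℝ)
    (hlam_pos : 0 < lam) (hlam_le : lam ≤ 1)
    (hnonneg : ∀ a b, 0 ≤ w a b)
    (hsymm : ∀ a b, w a b = w b a)
    (htri : ∀ a b c, w a b + w b c ≥ lam * w c a)
    (hL : ∀ a b, a ≠ b → w a b ≤ L)
    (u v : V) (huv : u ≠ v) (hheavy : w u v ≥ L / 2) :
    ∃ x, (x = u ∨ x = v) ∧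
      (((Finset.univ.filter fun y : V => y ≠ x ∧ w x y ≥ lam * L / 4).card : ℝ) + 1
        ≥ (Fintype.card V : ℝ) / 2) := by
  have hL0 : 0 ≤ L := le_trans (by linarith [hnonneg u v, (hL u v huv)]) (hL u v huv)
  set A := Finset.univ.filter fun y : V => y ≠ u ∧ w u y ≥ lam * L / 4 with hA
  set B := Finset.univ.filter fun y : V => y ≠ v ∧ w v y ≥ lam * L / 4 with hB
  have hcover : (Finset.univ : Finset V) ⊆ A ∪ B := by
    intro y _
    have htriy := htri u y v
    have hwuv : lam * w v u ≥ lam * (L / 2) := by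
      rw [hsymm v u]
      exact mul_le_mul_of_nonneg_left hheavy hlam_pos.le
    have hsum : w u y + w y v ≥ lam * L / 2 := by linarith
    by_cases hyu : y = u
    · -- y = u : u ∈ B since w v u ≥ L/2 ≥ lam*L/4
      have : w v u ≥ lam * L / 4 := by
        rw [hsymm v u]
        nlinarith
      refine Finset.mem_union_right _ ?_
      simp [hB, hyu, this, huv]
    · by_cases hyv : y = v
      · have : w u v ≥ lam * L / 4 := by nlinarith
        refine Finset.mem_union_left _ ?_
        simp [hA, hyv, huv.symm, hsymm, this]
      · rcases le_or_gt (lam * L / 4) (w u y) with h | h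
        · exact Finset.mem_union_left _ (by simp [hA, hyu, h])
        · have : w v y ≥ lam * L / 4 := by rw [hsymm v y]; linarith
          exact Finset.mem_union_right _ (by simp [hB, hyv, this])
  have hcard : Fintype.card V ≤ A.card + B.card := by
    calc Fintype.card V = (Finset.univ : Finset V).card := rfl
      _ ≤ (A ∪ B).card := Finset.card_le_card hcover
      _ ≤ A.card + B.card := Finset.card_union_le A B
  have hcardR : (Fintype.card V : ℝ) ≤ (A.card : ℝ) + (B.card : ℝ) := by
    exact_mod_cast hcard
  rcases le_or_gt ((Fintype.card V : ℝ) / 2) (A.card : ℝ) with h | h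
  · exact ⟨u, Or.inl rfl, by rw [← hA]; linarith⟩
  · exact ⟨v, Or.inr rfl, by rw [← hB]; linarith⟩
end

section
/- Let G be a λ-metric graph on vertex set V with edge weights bounded by L. Suppose ν ⊆ V is a set of vertices each having at least |V|/4 neighbors u with w(v,u) ≥ λL/4 (degree in the λL/4-threshold graph at least |V|/4), and let E_ν be the set of edges of G incident to at least one vertex of ν. Then (λ/32)·L·|V|·|ν| ≤ Σ_{e∈E_ν} w(e) ≤ L·|V|·|ν|. -/
/-!
Read the edge sum as a sum over ordered pairs `(u, v)` with `u ≠ v`. It dominates the row sums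
`∑_{u ≠ v} w u v` of the vertices `v ∈ ν`, and is dominated by the row sums of `ν` taken once from
each endpoint. A row of `v ∈ ν` has at least `|V|/4` entries of weight at least `λL/4`, so it is
at least `λL|V|/16`; every row is at most `|V|L`. The factor `1/2` turns these into the bounds
`(λ/32)L|V||ν|` and `L|V||ν|`.
-/

open Finset

namespace Finset

variable {V M : Type*} [Fintype V] [DecidableEq V]

theorem sum_sum_erase_comm [AddCommMonoid M] (f : V → V → M) :
    ∑ u, ∑ v ∈ univ.erase u, f u v = ∑ v, ∑ u ∈ univ.erase v, f u v :=
  sum_comm' fun u v => by simp [and_comm, eq_comm]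

theorem sum_sum_erase_ite_mem_left [AddCommMonoid M] (s : Finset V) (f : V → V → M) :
    ∑ u, ∑ v ∈ univ.erase u, (if u ∈ s then f u v else 0) = ∑ u ∈ s, ∑ v ∈ univ.erase u, f u v := by
  simp_rw [← ite_sum_zero, sum_ite_mem, univ_inter]

theorem sum_sum_erase_ite_mem_right [AddCommMonoid M] (s : Finset V) (f : V → V → M) :
    ∑ u, ∑ v ∈ univ.erase u, (if v ∈ s then f u v else 0) = ∑ v ∈ s, ∑ u ∈ univ.erase v, f u v := by
  rw [sum_sum_erase_comm, sum_sum_erase_ite_mem_left]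

section Incident

variable [AddCommMonoid M] [PartialOrder M] [IsOrderedAddMonoid M] {f : V → V → M}

theorem sum_sum_erase_le_sum_sum_erase_ite_or (hf : ∀ u v, 0 ≤ f u v) (s : Finset V) :
    ∑ v ∈ s, ∑ u ∈ univ.erase v, f u v
      ≤ ∑ u, ∑ v ∈ univ.erase u, (if u ∈ s ∨ v ∈ s then f u v else 0) := by
  rw [← sum_sum_erase_ite_mem_right s f]
  gcongr with u _ v _
  split_ifs <;> simp_all

theorem sum_sum_erase_ite_or_le (hf : ∀ u v, 0 ≤ f u v) (s : Finset V) :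
    ∑ u, ∑ v ∈ univ.erase u, (if u ∈ s ∨ v ∈ s then f u v else 0)
      ≤ ∑ u ∈ s, ∑ v ∈ univ.erase u, f u v + ∑ v ∈ s, ∑ u ∈ univ.erase v, f u v := by
  rw [← sum_sum_erase_ite_mem_left s f, ← sum_sum_erase_ite_mem_right s f, ← sum_add_distrib]
  gcongr with u _
  rw [← sum_add_distrib]
  gcongr with v _
  split_ifs <;> simp_all [le_add_of_nonneg_left]

end Incident

section Row

variable {f : V → ℝ}

theorem mul_card_filter_le_sum_erase (hf : ∀ u, 0 ≤ f u) (t : ℝ) (v : V) :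
    t * #{u | u ≠ v ∧ t ≤ f u} ≤ ∑ u ∈ univ.erase v, f u := by
  calc t * #{u | u ≠ v ∧ t ≤ f u}
      = #{u | u ≠ v ∧ t ≤ f u} • t := by rw [nsmul_eq_mul, mul_comm]
    _ ≤ ∑ u ∈ {u | u ≠ v ∧ t ≤ f u}, f u :=
      card_nsmul_le_sum _ _ _ fun u hu => (mem_filter.1 hu).2.2
    _ ≤ ∑ u ∈ univ.erase v, f u :=
      sum_le_sum_of_subset_of_nonneg (fun u hu => mem_erase.2 ⟨(mem_filter.1 hu).2.1, mem_univ u⟩)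
        fun u _ _ => hf u

theorem sum_erase_le_card_mul {L : ℝ} (v : V) (hf : ∀ u, u ≠ v → f u ≤ L) (hL : 0 ≤ L) :
    ∑ u ∈ univ.erase v, f u ≤ Fintype.card V * L := by
  calc ∑ u ∈ univ.erase v, f u ≤ #(univ.erase v) • L :=
        sum_le_card_nsmul _ _ _ fun u hu => hf u (ne_of_mem_erase hu)
    _ ≤ Fintype.card V * L := by
      rw [nsmul_eq_mul]
      gcongr
      exact_mod_cast card_le_univ _

end Row

end Finset

theorem weight_of_edges_incident_to_high_degree_set_general {V : Type*} [Fintype V] [DecidableEq V]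
    (w : V → V → ℝ) (lam L : ℝ)
    (hlam_pos : 0 < lam)
    (hnonneg : ∀ a b, 0 ≤ w a b)
    (hL : ∀ a b, a ≠ b → w a b ≤ L)
    (ν : Finset V)
    (hdeg : ∀ v ∈ ν, ((Finset.univ.filter fun u : V => u ≠ v ∧ w u v ≥ lam * L / 4).card : ℝ)
      ≥ (Fintype.card V : ℝ) / 4) :
    (lam / 32) * L * (Fintype.card V) * ν.card
      ≤ (1 / 2) * ∑ u : V, ∑ v ∈ Finset.univ.erase u,
          (if u ∈ ν ∨ v ∈ ν then w u v else 0) ∧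
    (1 / 2) * ∑ u : V, ∑ v ∈ Finset.univ.erase u,
          (if u ∈ ν ∨ v ∈ ν then w u v else 0)
      ≤ L * (Fintype.card V) * ν.card := by
  -- `0 ≤ L` comes from a heavy neighbour `u ≠ v` of `v`: `0 ≤ w u v ≤ L`
  have hL_nonneg : ∀ v ∈ ν, 0 ≤ L := fun v hv => by
    have : 0 < (Fintype.card V : ℝ) / 4 := by
      have := Fintype.card_pos_iff.2 ⟨v⟩
      positivity
    obtain ⟨u, hu⟩ := card_pos.1 (by exact_mod_cast this.trans_le (hdeg v hv))
    exact (hnonneg u v).trans (hL u v (mem_filter.1 hu).2.1)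
  constructor
  · calc lam / 32 * L * Fintype.card V * #ν
        = 1 / 2 * ∑ _v ∈ ν, lam * L / 4 * (Fintype.card V / 4) := by
          rw [sum_const, nsmul_eq_mul]; ring
      _ ≤ 1 / 2 * ∑ v ∈ ν, lam * L / 4 * #{u | u ≠ v ∧ lam * L / 4 ≤ w u v} := by
          gcongr with v hv
          · have := hL_nonneg v hv; positivity
          · exact hdeg v hv
      _ ≤ 1 / 2 * ∑ v ∈ ν, ∑ u ∈ univ.erase v, w u v := by
          gcongr with v; exact mul_card_filter_le_sum_erase (hnonneg · v) _ v
      _ ≤ _ := by gcongr; exact sum_sum_erase_le_sum_sum_erase_ite_or hnonneg ν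
  · calc 1 / 2 * ∑ u, ∑ v ∈ univ.erase u, (if u ∈ ν ∨ v ∈ ν then w u v else 0)
        ≤ 1 / 2 * (∑ u ∈ ν, ∑ v ∈ univ.erase u, w u v + ∑ v ∈ ν, ∑ u ∈ univ.erase v, w u v) := by
          gcongr; exact sum_sum_erase_ite_or_le hnonneg ν
      _ ≤ 1 / 2 * (∑ _u ∈ ν, Fintype.card V * L + ∑ _v ∈ ν, Fintype.card V * L) := by
          gcongr with u hu v hv
          · exact sum_erase_le_card_mul u (fun v hv => hL u v hv.symm) (hL_nonneg u hu)
          · exact sum_erase_le_card_mul v (fun u hu => hL u v hu) (hL_nonneg v hv)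
      _ = L * Fintype.card V * #ν := by rw [sum_const, nsmul_eq_mul]; ring

/-- In a λ-metric graph with weights bounded by `L`, if every vertex of
`ν ⊆ V` has at least `|V|/4` neighbors at distance at least `λL/4`, then the total weight
of the edges incident to `ν` is between `(λ/32)·L·|V|·|ν|` and `L·|V|·|ν|`.
The edge sum is expressed as half the sum over ordered pairs `(u,v)`, `u ≠ v`, with an
endpoint in `ν`. -/
theorem weight_of_edges_incident_to_high_degree_set {V : Type*} [Fintype V] [DecidableEq V]
    (w : V → V → ℝ) (lam L : ℝ)
    (hlam_pos : 0 < lam) (hlam_le : lam ≤ 1)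
    (hnonneg : ∀ a b, 0 ≤ w a b)
    (hsymm : ∀ a b, w a b = w b a)
    (htri : ∀ a b c, w a b + w b c ≥ lam * w c a)
    (hL : ∀ a b, a ≠ b → w a b ≤ L)
    (ν : Finset V)
    (hdeg : ∀ v ∈ ν, ((Finset.univ.filter fun u : V => u ≠ v ∧ w u v ≥ lam * L / 4).card : ℝ)
      ≥ (Fintype.card V : ℝ) / 4) :
    (lam / 32) * L * (Fintype.card V) * ν.card
      ≤ (1 / 2) * ∑ u : V, ∑ v ∈ Finset.univ.erase u,
          (if u ∈ ν ∨ v ∈ ν then w u v else 0) ∧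
    (1 / 2) * ∑ u : V, ∑ v ∈ Finset.univ.erase u,
          (if u ∈ ν ∨ v ∈ ν then w u v else 0)
      ≤ L * (Fintype.card V) * ν.card :=
  weight_of_edges_incident_to_high_degree_set_general w lam L hlam_pos hnonneg hL ν hdeg
end

section
/- Let G be a λ-metric graph on n ≥ 3 vertices and let v be any vertex. Then the sum of edge weights incident to v satisfies Σ_{u ≠ v} w(u,v) > (λ/n)·Σ_{e ∈ E} w(e), where the right-hand sum is over all edges of the complete graph. -/
/-!
Let `f = starWeight w v` (`w x v` off `v`, `0` at `v`), so that `∑ f` is the weight at `v`.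
Every edge satisfies `λ · w a b ≤ f a + f b`: through the triangle `a, v, b` when neither end is `v`,
and from `λ ≤ 1` when one end is `v`. Summing over ordered pairs counts each `f x` exactly
`2 (n - 1)` times, hence `λ · ∑_{a ≠ b} w a b ≤ 2 (n - 1) ∑ f ≤ 2 n ∑ f`.
-/

open Finset

section PairSums

variable {ι R : Type*} [Fintype ι] [DecidableEq ι] [CommRing R]

theorem sum_sum_erase_add_eq (f : ι → R) :
    ∑ a, ∑ b ∈ univ.erase a, (f a + f b) = 2 * ((Fintype.card ι : R) - 1) * ∑ a, f a := by
  simp only [sum_add_distrib, sum_const, nsmul_eq_mul,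
    sum_erase_eq_sub (mem_univ _), sum_sub_distrib, ← mul_sum, card_univ]
  ring

theorem sum_sum_erase_le_of_le_add [PartialOrder R] [IsOrderedRing R] {g : ι → ι → R}
    (f : ι → R) (hg : ∀ a b, a ≠ b → g a b ≤ f a + f b) :
    ∑ a, ∑ b ∈ univ.erase a, g a b ≤ 2 * ((Fintype.card ι : R) - 1) * ∑ a, f a :=
  sum_sum_erase_add_eq f ▸ sum_le_sum fun a _ => sum_le_sum fun b hb =>
    hg a b (ne_of_mem_erase hb).symm

end PairSums

section LambdaMetric

variable {V : Type*} [DecidableEq V]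

def starWeight (w : V → V → ℝ) (v x : V) : ℝ := if x ≠ v then w x v else 0

theorem sum_starWeight [Fintype V] (w : V → V → ℝ) (v : V) :
    ∑ x, starWeight w v x = ∑ u ∈ univ.erase v, w u v := by
  rw [← filter_ne', sum_filter]
  rfl

theorem mul_le_starWeight_add {w : V → V → ℝ} {lam : ℝ} (hlam_le : lam ≤ 1)
    (hnonneg : ∀ a b, 0 ≤ w a b) (hsymm : ∀ a b, w a b = w b a)
    (htri : ∀ a b c, w a b + w b c ≥ lam * w c a) (v : V) {a b : V} (hab : a ≠ b) :
    lam * w a b ≤ starWeight w v a + starWeight w v b := by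
  have hedge : ∀ x, lam * w x v ≤ w x v := fun x =>
    mul_le_of_le_one_left (hnonneg x v) hlam_le
  unfold starWeight
  by_cases ha : a = v
  · subst ha
    simpa [hab.symm, hsymm a b] using hedge b
  by_cases hb : b = v
  · subst hb
    simpa [ha] using hedge a
  simp only [ne_eq, ha, hb, not_false_eq_true, if_true]
  linarith [htri b v a, hsymm a b, hsymm v a]

end LambdaMetric

theorem vertex_weight_lower_bound_general {V : Type*} [Fintype V] [DecidableEq V]
    (w : V → V → ℝ) (lam : ℝ)
    (hlam_le : lam ≤ 1)
    (hnonneg : ∀ a b, 0 ≤ w a b)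
    (hsymm : ∀ a b, w a b = w b a)
    (htri : ∀ a b c, w a b + w b c ≥ lam * w c a)
    (v : V) :
    ∑ u ∈ Finset.univ.erase v, w u v
      ≥ (lam / Fintype.card V) *
          ((1 / 2) * ∑ a : V, ∑ b ∈ Finset.univ.erase a, w a b) := by
  set n : ℝ := (Fintype.card V : ℝ)
  set S := ∑ u ∈ univ.erase v, w u v
  have hn : 0 < n := Nat.cast_pos.mpr (Fintype.card_pos_iff.mpr ⟨v⟩)
  have hS : 0 ≤ S := sum_nonneg fun u _ => hnonneg u v
  have hpairs : lam * ∑ a, ∑ b ∈ univ.erase a, w a b ≤ 2 * (n - 1) * S :=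
    calc lam * ∑ a, ∑ b ∈ univ.erase a, w a b
        = ∑ a, ∑ b ∈ univ.erase a, lam * w a b := by simp only [mul_sum]
      _ ≤ 2 * (n - 1) * ∑ x, starWeight w v x :=
        sum_sum_erase_le_of_le_add _ fun a b hab =>
          mul_le_starWeight_add hlam_le hnonneg hsymm htri v hab
      _ = 2 * (n - 1) * S := by rw [sum_starWeight]
  rw [ge_iff_le, div_mul_eq_mul_div, mul_left_comm, div_le_iff₀ hn]
  nlinarith

/-- In a λ-metric graph on `n ≥ 3` vertices, the total weight of edges
incident to any fixed vertex `v` is at least `(λ/n)` times the total weight of all edges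
(the total edge weight being half the sum over ordered pairs of distinct vertices). -/
theorem vertex_weight_lower_bound {V : Type*} [Fintype V] [DecidableEq V]
    (w : V → V → ℝ) (lam : ℝ)
    (hlam_pos : 0 < lam) (hlam_le : lam ≤ 1)
    (hnonneg : ∀ a b, 0 ≤ w a b)
    (hsymm : ∀ a b, w a b = w b a)
    (htri : ∀ a b c, w a b + w b c ≥ lam * w c a)
    (hn : 3 ≤ Fintype.card V)
    (v : V) :
    ∑ u ∈ Finset.univ.erase v, w u v
      ≥ (lam / Fintype.card V) *
          ((1 / 2) * ∑ a : V, ∑ b ∈ Finset.univ.erase a, w a b) :=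
  vertex_weight_lower_bound_general w lam hlam_le hnonneg hsymm htri v
end

section
/- Let G be a λ-metric graph on n vertices and let S ⊆ V be a set of ⌈1/λ⌉ vertices. Define W_S = Σ_{v∈S} Σ_{u≠v} w(u,v) (each edge with both endpoints in S counted twice). Then (1/n)·Σ_{e∈E} w(e) ≤ W_S ≤ 2·Σ_{e∈E} w(e). Consequently, setting ŵ' = W_S / (2·C(n,2)), we have w̄/(2n) ≤ ŵ' ≤ w̄, where w̄ is the average edge weight. -/
/-- In a λ-metric graph on `n ≥ 3` vertices, for any set `S` of `⌈1/λ⌉`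
vertices, the quantity `W_S = Σ_{v∈S} Σ_{u≠v} w(u,v)` satisfies
`(1/n)·Σ_e w(e) ≤ W_S ≤ 2·Σ_e w(e)`, and hence `ŵ' = W_S/(2·C(n,2))` satisfies
`w̄/(2n) ≤ ŵ' ≤ w̄` where `w̄` is the average edge weight. -/
theorem average_weight_crude_estimate {V : Type*} [Fintype V] [DecidableEq V]
    (w : V → V → ℝ) (lam : ℝ)
    (hlam_pos : 0 < lam) (hlam_le : lam ≤ 1)
    (hnonneg : ∀ a b, 0 ≤ w a b)
    (hsymm : ∀ a b, w a b = w b a)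
    (htri : ∀ a b c, w a b + w b c ≥ lam * w c a)
    (hn : 3 ≤ Fintype.card V)
    (S : Finset V) (hS : S.card = ⌈(1 : ℝ) / lam⌉₊)
    (totalW WS wbar what' : ℝ)
    (htotal : totalW = (1 / 2) * ∑ a : V, ∑ b ∈ Finset.univ.erase a, w a b)
    (hWS : WS = ∑ v ∈ S, ∑ u ∈ Finset.univ.erase v, w u v)
    (hwbar : wbar = totalW / ((Fintype.card V).choose 2))
    (hwhat : what' = WS / (2 * (Fintype.card V).choose 2)) :
    ((1 / Fintype.card V) * totalW ≤ WS ∧ WS ≤ 2 * totalW) ∧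
      (wbar / (2 * Fintype.card V) ≤ what' ∧ what' ≤ wbar) := by
  classical
  have hn0 : 0 < Fintype.card V := by omega
  set n : ℝ := (Fintype.card V : ℝ) with hndef
  have hnR : (0:ℝ) < n := by rw [hndef]; exact_mod_cast hn0
  set D : V → ℝ := fun v => ∑ u ∈ Finset.univ.erase v, w u v with hD
  have hDnonneg : ∀ v, 0 ≤ D v := fun v => Finset.sum_nonneg fun u _ => hnonneg u v
  have hSsum : ∑ a : V, ∑ b ∈ Finset.univ.erase a, w a b = 2 * totalW := by
    rw [htotal]; ring
  have htotal_nonneg : 0 ≤ totalW := by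
    have : 0 ≤ ∑ a : V, ∑ b ∈ Finset.univ.erase a, w a b :=
      Finset.sum_nonneg fun a _ => Finset.sum_nonneg fun b _ => hnonneg a b
    rw [htotal]; linarith
  -- key per-vertex lemma
  have hkey : ∀ v : V, lam * (2 * totalW) ≤ 2 * n * D v := by
    intro v
    set t : V → ℝ := fun x => if x = v then 0 else w x v with ht
    have htnonneg : ∀ x, 0 ≤ t x := by
      intro x; simp only [ht]; split
      · exact le_refl 0
      · exact hnonneg x v
    have hT : ∑ x : V, t x = D v := by
      rw [← Finset.add_sum_erase _ t (Finset.mem_univ v)]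
      simp only [ht, if_pos rfl, zero_add, hD]
      exact Finset.sum_congr rfl fun x hx => if_neg (Finset.ne_of_mem_erase hx)
    have hTnonneg : 0 ≤ ∑ x : V, t x := Finset.sum_nonneg fun x _ => htnonneg x
    have hstep : ∀ a b : V, a ≠ b → lam * w a b ≤ t a + t b := by
      intro a b hab
      by_cases ha : a = v
      · subst ha
        have hb : ¬ (b = a) := fun h => hab h.symm
        simp only [ht, if_pos rfl, if_neg hb, zero_add]
        have : lam * w a b ≤ 1 * w a b :=
          mul_le_mul_of_nonneg_right hlam_le (hnonneg a b)
        rw [hsymm b a]; linarith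
      · by_cases hb : b = v
        · subst hb
          simp only [ht, if_pos rfl, if_neg ha, add_zero]
          have : lam * w a b ≤ 1 * w a b :=
            mul_le_mul_of_nonneg_right hlam_le (hnonneg a b)
          linarith
        · simp only [ht, if_neg ha, if_neg hb]
          have h1 : w a v + w v b ≥ lam * w b a := htri a v b
          rw [hsymm v b, hsymm b a] at h1
          linarith
    have hle : lam * (2 * totalW) ≤ ∑ a : V, ∑ b ∈ Finset.univ.erase a, (t a + t b) := by
      rw [← hSsum, Finset.mul_sum]
      apply Finset.sum_le_sum
      intro a _
      rw [Finset.mul_sum]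
      apply Finset.sum_le_sum
      intro b hb
      exact hstep a b (fun h => (Finset.ne_of_mem_erase hb) h.symm)
    have hcomp : ∑ a : V, ∑ b ∈ Finset.univ.erase a, (t a + t b)
        = 2 * n * (∑ x : V, t x) - 2 * (∑ x : V, t x) := by
      have hinner : ∀ a : V, ∑ b ∈ Finset.univ.erase a, (t a + t b)
          = (n * t a - t a) + ((∑ x : V, t x) - t a) := by
        intro a
        rw [Finset.sum_add_distrib, Finset.sum_erase_eq_sub (Finset.mem_univ a),
          Finset.sum_erase_eq_sub (Finset.mem_univ a), Finset.sum_const,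
          Finset.card_univ, nsmul_eq_mul]
      rw [Finset.sum_congr rfl fun a _ => hinner a, Finset.sum_add_distrib,
        Finset.sum_sub_distrib, Finset.sum_sub_distrib, ← Finset.mul_sum,
        Finset.sum_const, Finset.card_univ, nsmul_eq_mul, ← hndef]
      ring
    rw [hcomp, hT] at hle
    nlinarith [hDnonneg v]
  -- WS = sum of D over S
  have hWS' : WS = ∑ v ∈ S, D v := hWS
  -- lower bound
  have hcard : (1:ℝ)/lam ≤ (S.card : ℝ) := by
    rw [hS]; exact Nat.le_ceil _
  have h1 : (1 / n) * totalW ≤ WS := by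
    have hDlb : ∀ v : V, lam * totalW / n ≤ D v := by
      intro v
      have := hkey v
      rw [div_le_iff₀ hnR]
      nlinarith
    have hsum : (S.card : ℝ) * (lam * totalW / n) ≤ WS := by
      rw [hWS']
      calc (S.card : ℝ) * (lam * totalW / n) = ∑ _v ∈ S, lam * totalW / n := by
            rw [Finset.sum_const, nsmul_eq_mul]
        _ ≤ ∑ v ∈ S, D v := Finset.sum_le_sum fun v _ => hDlb v
    have hcl : 1 ≤ (S.card : ℝ) * lam := by
      have := mul_le_mul_of_nonneg_right hcard hlam_pos.le
      rw [div_mul_cancel₀ 1 (ne_of_gt hlam_pos)] at this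
      linarith
    have htn : 0 ≤ totalW / n := div_nonneg htotal_nonneg hnR.le
    calc (1 / n) * totalW = 1 * (totalW / n) := by ring
      _ ≤ ((S.card : ℝ) * lam) * (totalW / n) := mul_le_mul_of_nonneg_right hcl htn
      _ = (S.card : ℝ) * (lam * totalW / n) := by ring
      _ ≤ WS := hsum
  -- upper bound
  have h2 : WS ≤ 2 * totalW := by
    rw [hWS', ← hSsum]
    have hsub : ∑ v ∈ S, D v ≤ ∑ v : V, D v :=
      Finset.sum_le_sum_of_subset_of_nonneg (Finset.subset_univ S)
        (fun v _ _ => hDnonneg v)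
    have heq : ∑ v : V, D v = ∑ a : V, ∑ b ∈ Finset.univ.erase a, w a b := by
      apply Finset.sum_congr rfl
      intro v _
      exact Finset.sum_congr rfl fun u _ => hsymm u v
    linarith [heq ▸ hsub]
  refine ⟨⟨h1, h2⟩, ?_, ?_⟩
  · have hC : (0:ℝ) < ((Fintype.card V).choose 2 : ℝ) := by
      exact_mod_cast Nat.choose_pos (by omega)
    rw [hwbar, hwhat, div_div, div_le_div_iff₀ (by positivity) (by positivity)]
    have h1' : totalW ≤ n * WS := by
      have := mul_le_mul_of_nonneg_left h1 hnR.le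
      rw [← mul_assoc, mul_one_div, div_self (ne_of_gt hnR), one_mul] at this
      linarith
    nlinarith [mul_le_mul_of_nonneg_right h1' hC.le]
  · have hC : (0:ℝ) < ((Fintype.card V).choose 2 : ℝ) := by
      exact_mod_cast Nat.choose_pos (by omega)
    rw [hwbar, hwhat, div_le_div_iff₀ (by positivity) hC]
    nlinarith [mul_le_mul_of_nonneg_right h2 hC.le]
end

section
/- In the λ-metric graph decomposition, for every index i with 2 ≤ i ≤ t, every edge of the graph G_i has weight strictly less than or at most L_i = L/2^{i-1}. Formally: if for each i the vertex set V_{i+1} = V_i \ ν_i where ν_i contains all vertices of V_i with at least |V_i|/2 neighbors u ∈ V_i satisfying w(u,v) ≥ λL_i/4, then all edges within V_{i+1} have weight at most L_i/2. -/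
/-- One step of the λ-metric graph decomposition: if all edges inside `Vi`
have weight at most `Li`, and `ν ⊆ Vi` contains every vertex of `Vi` whose degree in the
`λLi/4`-threshold graph on `Vi` is at least `|Vi|/2`, then after removing `ν` all
remaining edges have weight at most `Li/2`. -/
theorem decomposition_halves_weight {V : Type*} [Fintype V] [DecidableEq V]
    (w : V → V → ℝ) (lam Li : ℝ)
    (hlam_pos : 0 < lam) (hlam_le : lam ≤ 1)
    (hnonneg : ∀ a b, 0 ≤ w a b)
    (hsymm : ∀ a b, w a b = w b a)
    (htri : ∀ a b c, w a b + w b c ≥ lam * w c a)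
    (Vi ν : Finset V) (hνsub : ν ⊆ Vi)
    (hLi : ∀ a ∈ Vi, ∀ b ∈ Vi, a ≠ b → w a b ≤ Li)
    (hν : ∀ v ∈ Vi,
      ((Vi.filter fun u => u ≠ v ∧ w u v ≥ lam * Li / 4).card : ℝ) ≥ (Vi.card : ℝ) / 2
        → v ∈ ν) :
    ∀ a ∈ Vi \ ν, ∀ b ∈ Vi \ ν, a ≠ b → w a b ≤ Li / 2 := by
  intro a ha b hb hab
  by_contra hgt
  push_neg at hgt
  rw [Finset.mem_sdiff] at ha hb
  obtain ⟨haV, haν⟩ := ha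
  obtain ⟨hbV, hbν⟩ := hb
  have hwab : w a b ≤ Li := hLi a haV b hbV hab
  have hLipos : 0 < Li := by
    have := hnonneg a b; linarith
  set A := Vi.filter fun u => u ≠ a ∧ w u a ≥ lam * Li / 4 with hA
  set B := Vi.filter fun u => u ≠ b ∧ w u b ≥ lam * Li / 4 with hB
  have hsub : Vi ⊆ A ∪ B := by
    intro u hu
    rw [Finset.mem_union, hA, hB, Finset.mem_filter, Finset.mem_filter]
    by_cases hua : u = a
    · right
      refine ⟨hu, ?_, ?_⟩
      · rw [hua]; exact hab
      · rw [hua]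
        nlinarith [hnonneg a b]
    · by_cases hub : u = b
      · left
        refine ⟨hu, ?_, ?_⟩
        · rw [hub]; exact Ne.symm hab
        · rw [hub, hsymm b a]
          nlinarith
      · have h1 : w a u + w u b ≥ lam * w b a := htri a u b
        rw [hsymm b a] at h1
        have h2 : lam * w a b > lam * (Li / 2) := by
          exact mul_lt_mul_of_pos_left hgt hlam_pos
        rcases le_or_gt (lam * Li / 4) (w u a) with h | h
        · left; exact ⟨hu, hua, h⟩
        · right
          refine ⟨hu, hub, ?_⟩
          rw [hsymm a u] at h1
          nlinarith
  have hcard : (Vi.card : ℝ) ≤ (A.card : ℝ) + (B.card : ℝ) := by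
    have := Finset.card_le_card hsub
    have h2 := Finset.card_union_le A B
    have : Vi.card ≤ A.card + B.card := this.trans h2
    exact_mod_cast this
  rcases le_or_gt ((Vi.card : ℝ) / 2) (A.card : ℝ) with h | h
  · exact haν (hν a haV h)
  · have : ((Vi.card : ℝ) / 2) ≤ (B.card : ℝ) := by linarith
    exact hbν (hν b hbV this)
end

section
/- Concentration implies approximation transfer for densest subgraph: let G be a complete graph on n vertices with nonnegative weights, α, ε > 0, and let Y_{u,v} be nonnegative numbers (one per edge) such that for every nonempty S ⊆ V, |Y_S − α·w(S)| ≤ ε·α·opt_D·|S|, where Y_S = Σ_{u,v∈S} Y_{u,v}, w(S) = Σ_{u,v∈S} w(u,v), and opt_D is the maximum density of G. If S maximizes Y_S/|S| up to factor φ (i.e., Y_S/|S| ≥ φ·max_{S''} Y_{S''}/|S''|), then w(S)/|S| ≥ (φ − 2ε)·opt_D. -/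
/-!
Uniform closeness transfers maxima: if every `Y`-density is within `δ = ε·α·opt_D` of `α` times
the `w`-density, then the largest `Y`-density is at least `α·opt_D − δ` (look at a densest
subgraph), so a `φ`-approximate `Y`-maximizer has `Y`-density at least `φ(α·opt_D − δ)`, and
hence `α` times its `w`-density is at least `φ(α·opt_D − δ) − δ ≥ α(φ − 2ε)·opt_D`.
-/

namespace Finset

variable {ι : Type*} {P : Finset ι} {f g : ι → ℝ} {α δ : ℝ}

theorem mul_sup'_sub_le_sup'_of_abs_sub_le (hP : P.Nonempty)
    (hgf : ∀ i ∈ P, |g i - α * f i| ≤ δ) :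
    α * P.sup' hP f - δ ≤ P.sup' hP g := by
  obtain ⟨i, hi, hfi⟩ := P.exists_mem_eq_sup' hP f
  calc α * P.sup' hP f - δ = α * f i - δ := by rw [hfi]
    _ ≤ g i := by linarith [(abs_le.mp (hgf i hi)).1]
    _ ≤ P.sup' hP g := P.le_sup' g hi

theorem mul_sup'_sub_two_mul_le_of_le_mul_sup' (hP : P.Nonempty)
    (hgf : ∀ i ∈ P, |g i - α * f i| ≤ δ) {φ : ℝ} (hφ0 : 0 ≤ φ) (hφ1 : φ ≤ 1)
    {s : ι} (hs : s ∈ P) (hgs : φ * P.sup' hP g ≤ g s) :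
    φ * (α * P.sup' hP f) - 2 * δ ≤ α * f s := by
  have hδ : 0 ≤ δ := (abs_nonneg _).trans (hgf s hs)
  have hsup := mul_sup'_sub_le_sup'_of_abs_sub_le hP hgf
  have hgs_lb : φ * (α * P.sup' hP f - δ) ≤ g s :=
    (mul_le_mul_of_nonneg_left hsup hφ0).trans hgs
  nlinarith [(abs_le.mp (hgf s hs)).2]

end Finset

set_option maxHeartbeats 1000000 in
theorem densest_subgraph_transfer_general {V : Type*} [Fintype V]
    (α ε φ : ℝ) (hα : 0 < α) (hφ0 : 0 < φ) (hφ1 : φ ≤ 1)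
    (wS YS : Finset V → ℝ)
    (hP : ((Finset.univ : Finset V).powerset.filter fun S => S.Nonempty).Nonempty)
    (optD : ℝ)
    (hoptD : optD = (((Finset.univ : Finset V).powerset.filter fun S => S.Nonempty).sup'
      hP fun S => wS S / S.card))
    (hconc : ∀ S : Finset V, S.Nonempty → |YS S - α * wS S| ≤ ε * α * optD * S.card)
    (S : Finset V) (hSne : S.Nonempty)
    (happrox : YS S / S.card ≥
      φ * (((Finset.univ : Finset V).powerset.filter fun S'' => S''.Nonempty).sup'
        hP fun S'' => YS S'' / S''.card)) :
    wS S / S.card ≥ (φ - 2 * ε) * optD := by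
  have hdensity : ∀ T ∈ (Finset.univ : Finset V).powerset.filter fun S => S.Nonempty,
      |YS T / T.card - α * (wS T / T.card)| ≤ ε * α * optD := by
    intro T hT
    have hcard : (0 : ℝ) < T.card := by exact_mod_cast (Finset.mem_filter.mp hT).2.card_pos
    rw [← mul_div_assoc, ← sub_div, abs_div, abs_of_pos hcard, div_le_iff₀ hcard]
    exact hconc T (Finset.mem_filter.mp hT).2
  have hS : S ∈ (Finset.univ : Finset V).powerset.filter fun S => S.Nonempty := by
    simp [hSne]
  have key := Finset.mul_sup'_sub_two_mul_le_of_le_mul_sup' hP hdensity hφ0.le hφ1 hS happrox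
  rw [← hoptD] at key
  exact le_of_mul_le_mul_left (by linarith) hα

set_option maxHeartbeats 1000000 in
/-- approximation transfer for densest subgraph. If for every nonempty
`S ⊆ V` the sample value `Y_S` is within `ε·α·optD·|S|` of `α·w(S)`, and `S` is a
`φ`-approximate densest subgraph with respect to `Y`, then `S` is a `(φ − 2ε)`-approximate
densest subgraph with respect to `w`. Here `w(S)` and `Y(S)` are half the sums over
ordered pairs inside `S`, and `optD` is the maximum `w`-density. -/
theorem densest_subgraph_transfer {V : Type*} [Fintype V] [DecidableEq V]
    (w Y : V → V → ℝ)
    (hw_nonneg : ∀ a b, 0 ≤ w a b) (hY_nonneg : ∀ a b, 0 ≤ Y a b)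
    (hn : 2 ≤ Fintype.card V)
    (α ε φ : ℝ) (hα : 0 < α) (hε : 0 < ε) (hφ0 : 0 < φ) (hφ1 : φ ≤ 1)
    (wS YS : Finset V → ℝ)
    (hwS : ∀ S, wS S = (1 / 2) * ∑ a ∈ S, ∑ b ∈ S.erase a, w a b)
    (hYS : ∀ S, YS S = (1 / 2) * ∑ a ∈ S, ∑ b ∈ S.erase a, Y a b)
    (hP : ((Finset.univ : Finset V).powerset.filter fun S => S.Nonempty).Nonempty)
    (optD : ℝ)
    (hoptD : optD = (((Finset.univ : Finset V).powerset.filter fun S => S.Nonempty).sup'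
      hP fun S => wS S / S.card))
    (hconc : ∀ S : Finset V, S.Nonempty → |YS S - α * wS S| ≤ ε * α * optD * S.card)
    (S : Finset V) (hSne : S.Nonempty)
    (happrox : YS S / S.card ≥
      φ * (((Finset.univ : Finset V).powerset.filter fun S'' => S''.Nonempty).sup'
        hP fun S'' => YS S'' / S''.card)) :
    wS S / S.card ≥ (φ - 2 * ε) * optD :=
  densest_subgraph_transfer_general α ε φ hα hφ0 hφ1 wS YS hP optD hoptD hconc S hSne happrox
end

section
/- Lower bound for distinguishing: consider two distributions of complete graphs on n vertices: G₁ where every edge has weight 0; and G₂ where an index r ∈ {1,…,n} is chosen uniformly at random and every edge incident to v_r has weight 1, all other edges weight 0. Any (possibly randomized) algorithm making at most δn − 1 edge-weight queries distinguishes G₁ from G₂ with probability strictly less than 0.5 + δ, for any δ ∈ (0, 0.5]. -/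
/-- An adaptive deterministic query algorithm on a complete graph with `n` vertices making
`k` edge-weight queries: the `i`-th query may depend on the previous answers, and the
final output is a Boolean guess (`false` = "G₁", `true` = "G₂"). -/
structure QueryAlg (n k : ℕ) where
  query : (i : Fin k) → (Fin i.val → ℝ) → Fin n × Fin n
  output : (Fin k → ℝ) → Bool

/-- The sequence of answers obtained by running the algorithm on weights `w`. -/
def QueryAlg.answers {n k : ℕ} (A : QueryAlg n k) (w : Fin n → Fin n → ℝ) :
    (i : Fin k) → ℝ
  | ⟨i, hi⟩ =>
    let q := A.query ⟨i, hi⟩ (fun j => A.answers w ⟨j.val, j.isLt.trans hi⟩)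
    w q.1 q.2
  termination_by i => i.val

/-- The output of the algorithm on weights `w`. -/
def QueryAlg.run {n k : ℕ} (A : QueryAlg n k) (w : Fin n → Fin n → ℝ) : Bool :=
  A.output (A.answers w)

lemma answers_congr {n k : ℕ} (A : QueryAlg n k) (w w' : Fin n → Fin n → ℝ)
    (H : ∀ i : Fin k,
      (fun q : Fin n × Fin n => w q.1 q.2 = w' q.1 q.2)
        (A.query i (fun j => A.answers w' ⟨j.val, j.isLt.trans i.isLt⟩))) :
    A.answers w = A.answers w' := by
  funext i
  obtain ⟨i, hi⟩ := i
  induction i using Nat.strong_induction_on with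
  | _ i ih =>
    rw [QueryAlg.answers, QueryAlg.answers]
    simp only
    have hfun : (fun j : Fin i => A.answers w ⟨j.val, j.isLt.trans hi⟩)
        = (fun j : Fin i => A.answers w' ⟨j.val, j.isLt.trans hi⟩) := by
      funext j; exact ih j.val j.isLt _
    rw [hfun]
    exact H ⟨i, hi⟩

/-- Vertices touched by the queries along the zero run. -/
def touched {n k : ℕ} (B : QueryAlg n k) (wZero : Fin n → Fin n → ℝ) : Finset (Fin n) :=
  Finset.univ.biUnion (fun i : Fin k =>
    let q := B.query i (fun j => B.answers wZero ⟨j.val, j.isLt.trans i.isLt⟩)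
    {q.1, q.2})

lemma touched_card {n k : ℕ} (B : QueryAlg n k) (wZero : Fin n → Fin n → ℝ) :
    (touched B wZero).card ≤ 2 * k := by
  classical
  calc (touched B wZero).card ≤ ∑ i : Fin k, 2 := by
        apply Finset.card_biUnion_le.trans
        apply Finset.sum_le_sum
        intro i _
        exact Finset.card_insert_le _ _ |>.trans (by simp)
    _ = 2 * k := by simp [mul_comm]

lemma run_eq_of_not_touched {n k : ℕ} (B : QueryAlg n k)
    (wZero : Fin n → Fin n → ℝ) (hwZero : wZero = fun _ _ => 0)
    (wStar : Fin n → Fin n → Fin n → ℝ)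
    (hwStar : wStar = fun r u v => if u ≠ v ∧ (u = r ∨ v = r) then 1 else 0)
    (r : Fin n) (hr : r ∉ touched B wZero) :
    B.run (wStar r) = B.run wZero := by
  unfold QueryAlg.run
  rw [answers_congr B (wStar r) wZero]
  intro i
  set q := B.query i (fun j => B.answers wZero ⟨j.val, j.isLt.trans i.isLt⟩) with hq
  have h1 : q.1 ≠ r ∧ q.2 ≠ r := by
    simp only [touched, Finset.mem_biUnion, Finset.mem_univ, true_and, not_exists] at hr
    have := hr i
    simp only [← hq, Finset.mem_insert, Finset.mem_singleton] at this
    push_neg at this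
    exact ⟨fun h => this.1 h.symm, fun h => this.2 h.symm⟩
  rw [hwStar, hwZero]
  simp only
  rw [if_neg]
  rintro ⟨-, h | h⟩
  · exact h1.1 h
  · exact h1.2 h


/-- any randomized algorithm (a probability distribution over deterministic
adaptive algorithms, given by seeds `s : σ` with probabilities `p s`) making at most
`δn − 1` edge-weight queries distinguishes the all-zero graph `G₁` from the random star
graph `G₂` (center `v_r` with `r` uniform, incident edges of weight `1`) with success
probability strictly less than `0.5 + δ`, for any `δ ∈ (0, 0.5]`. -/
theorem distinguishing_lower_bound (n k : ℕ) (hn : 0 < n)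
    (δ : ℝ) (hδ0 : 0 < δ) (hδ1 : δ ≤ 1 / 2)
    (hk : (k : ℝ) ≤ δ * n - 1)
    (σ : Type*) [Fintype σ] (p : σ → ℝ) (hp : ∀ s, 0 ≤ p s) (hp1 : ∑ s, p s = 1)
    (A : σ → QueryAlg n k)
    (wZero : Fin n → Fin n → ℝ) (hwZero : wZero = fun _ _ => 0)
    (wStar : Fin n → Fin n → Fin n → ℝ)
    (hwStar : wStar = fun r u v => if u ≠ v ∧ (u = r ∨ v = r) then 1 else 0) :
    (1 / 2) * (∑ s, p s * (if (A s).run wZero = false then 1 else 0))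
      + (1 / 2) * ((1 / (n : ℝ)) *
          ∑ r : Fin n, ∑ s, p s * (if (A s).run (wStar r) = true then 1 else 0))
      < 1 / 2 + δ := by
  classical
  have hn' : (0:ℝ) < n := by exact_mod_cast hn
  set a : σ → ℝ := fun s => if (A s).run wZero = false then 1 else 0 with ha
  set b : σ → Fin n → ℝ := fun s r => if (A s).run (wStar r) = true then 1 else 0 with hb
  have key : ∀ s, (1/2) * a s + (1/2) * ((1/(n:ℝ)) * ∑ r : Fin n, b s r)
      ≤ 1/2 + (k:ℝ)/n := by
    intro s
    have hcard : ∀ P : Fin n → Prop, ∀ _ : DecidablePred P,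
        (∑ r : Fin n, (if P r then (1:ℝ) else 0))
          = ((Finset.univ.filter P).card : ℝ) := by
      intro P _; rw [Finset.sum_boole]
    by_cases h : (A s).run wZero = false
    · have hsum : ∑ r : Fin n, b s r ≤ 2*(k:ℝ) := by
        have heq : ∑ r : Fin n, b s r
            = ((Finset.univ.filter (fun r => (A s).run (wStar r) = true)).card : ℝ) := by
          simp only [hb]; rw [Finset.sum_boole]
        rw [heq]
        have hsub : Finset.univ.filter (fun r => (A s).run (wStar r) = true)
            ⊆ touched (A s) wZero := by
          intro r hrmem
          by_contra hr
          have heq2 := run_eq_of_not_touched (A s) wZero hwZero wStar hwStar r hr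
          simp only [Finset.mem_filter, Finset.mem_univ, true_and] at hrmem
          rw [heq2, h] at hrmem
          exact Bool.noConfusion hrmem
        have := (Finset.card_le_card hsub).trans (touched_card (A s) wZero)
        exact_mod_cast this
      have ha1 : a s ≤ 1 := by simp only [ha]; split <;> norm_num
      have h2 : (1/2) * ((1/(n:ℝ)) * ∑ r : Fin n, b s r) ≤ (k:ℝ)/n := by
        rw [div_eq_mul_inv]
        calc (1/2) * ((1/(n:ℝ)) * ∑ r : Fin n, b s r)
            ≤ (1/2) * ((1/(n:ℝ)) * (2*(k:ℝ))) := by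
              gcongr
          _ = (k:ℝ) * ((n:ℝ))⁻¹ := by field_simp
      nlinarith [h2, ha1]
    · have ha0 : a s = 0 := by simp only [ha]; rw [if_neg h]
      have hsum : ∑ r : Fin n, b s r ≤ (n:ℝ) := by
        calc ∑ r : Fin n, b s r ≤ ∑ r : Fin n, (1:ℝ) := by
              apply Finset.sum_le_sum; intro r _
              simp only [hb]; split <;> norm_num
          _ = (n:ℝ) := by simp
      have h2 : (1/2) * ((1/(n:ℝ)) * ∑ r : Fin n, b s r) ≤ 1/2 := by
        have : (1/(n:ℝ)) * ∑ r : Fin n, b s r ≤ 1 := by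
          rw [one_div]
          calc ((n:ℝ))⁻¹ * ∑ r : Fin n, b s r ≤ ((n:ℝ))⁻¹ * (n:ℝ) := by
                gcongr
            _ = 1 := by field_simp
        nlinarith
      have hkn : (0:ℝ) ≤ (k:ℝ)/n := by positivity
      rw [ha0]; nlinarith
  have hrw : (1 / 2) * (∑ s, p s * a s)
      + (1 / 2) * ((1 / (n : ℝ)) * ∑ r : Fin n, ∑ s, p s * b s r)
      = ∑ s, p s * ((1/2) * a s + (1/2) * ((1/(n:ℝ)) * ∑ r : Fin n, b s r)) := by
    rw [Finset.sum_comm]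
    rw [Finset.mul_sum, Finset.mul_sum, Finset.mul_sum, ← Finset.sum_add_distrib]
    apply Finset.sum_congr rfl
    intro s _
    simp only [← mul_assoc]
    rw [← Finset.mul_sum]
    ring
  rw [hrw]
  have hbound : ∑ s, p s * ((1/2) * a s + (1/2) * ((1/(n:ℝ)) * ∑ r : Fin n, b s r))
      ≤ ∑ s, p s * (1/2 + (k:ℝ)/n) := by
    apply Finset.sum_le_sum
    intro s _
    exact mul_le_mul_of_nonneg_left (key s) (hp s)
  have hfinal : ∑ s, p s * (1/2 + (k:ℝ)/n) = 1/2 + (k:ℝ)/n := by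
    rw [← Finset.sum_mul, hp1, one_mul]
  have hlt : (k:ℝ)/n < δ := by
    rw [div_lt_iff₀ hn']
    nlinarith
  calc ∑ s, p s * ((1/2) * a s + (1/2) * ((1/(n:ℝ)) * ∑ r : Fin n, b s r))
      ≤ 1/2 + (k:ℝ)/n := by rw [← hfinal]; exact hbound
    _ < 1/2 + δ := by linarith
end
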